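/- Let S ⊆ F^d be an affine subspace of dimension q+1 and τ ⊆ S a set whose affine span has dimension q-1. Then among all lines contained in S, the fraction of lines ℓ with affine span of ℓ ∪ τ equal to S is greater than 1 - 2|F|^{-1}. -/

import Mathlib

/-!
Parametrise lines by pairs `(u, v)`, `v ≠ 0`, via `u + F v`: each line has exactly
`|F| (|F| - 1)` parametrisations, so it suffices to count pairs. Fix `t₀ ∈ τ`, let `D` be the
direction of `S` and `T ≤ D` that of `affineSpan τ`, of codimension two. The line `u + F v`
fails exactly when `T + F (u - t₀) + F v ≠ D`, i.e. when `u - t₀ ∈ T` or `v ∈ T + F (u - t₀)`.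
With `p = |F|` and `k = dim T` this leaves at most `p^(2k) (p³ + p² - p)` bad pairs among the
`p^(k+2) (p^(k+2) - 1)` pairs, a fraction below `2 / p`.
-/

/-- A line in `F^d` is a 1-dimensional affine subspace. -/
def IsLine (F : Type*) [Field F] (d : ℕ) (ℓ : Set (Fin d → F)) : Prop :=
  ∃ u v : Fin d → F, v ≠ 0 ∧ ℓ = Set.range fun t : F => u + t • v

open Module Submodule AffineSubspace Finset

lemma card_eq_card_mul_of_card_fiber {α β : Type*} [Finite α] [Finite β] (f : α → β) {k : ℕ}
    (h : ∀ b, Nat.card {a // f a = b} = k) : Nat.card α = Nat.card β * k := by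
  have := Fintype.ofFinite β
  rw [← Nat.card_congr (Equiv.sigmaFiberEquiv f), Nat.card_sigma]
  simp [h, Nat.card_eq_fintype_card]

lemma card_eq_card_and_add_card_and_not {α : Type*} [Finite α] (P Q : α → Prop) :
    Nat.card {x // P x} = Nat.card {x // P x ∧ Q x} + Nat.card {x // P x ∧ ¬Q x} := by
  classical
  rw [← Nat.card_sum]
  exact Nat.card_congr <| (Equiv.sumCompl fun x : {x // P x} => Q x).symm.trans <|
    Equiv.sumCongr (Equiv.subtypeSubtypeEquivSubtypeInter P Q)
      (Equiv.subtypeSubtypeEquivSubtypeInter P (¬Q ·))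

section CodimensionTwo

variable {F V : Type*} [Field F] [AddCommGroup V] [Module F V]

lemma finrank_sup_span_singleton_le [FiniteDimensional F V] (P : Submodule F V) (x : V) :
    finrank F ↥(P ⊔ F ∙ x) ≤ finrank F P + 1 := by
  by_cases hx : x ∈ P
  · rw [sup_eq_left.2 ((span_singleton_le_iff_mem _ _).2 hx)]
    omega
  · rw [finrank_sup_span_singleton hx]

variable {W : Submodule F V}

lemma sup_span_singleton_sup_span_singleton_eq_top_iff [FiniteDimensional F V]
    (hW : finrank F W + 2 = finrank F V) {w v : V} :
    W ⊔ F ∙ w ⊔ F ∙ v = ⊤ ↔ w ∉ W ∧ v ∉ W ⊔ F ∙ w := by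
  constructor
  · intro h
    have hrank : finrank F ↥(W ⊔ F ∙ w ⊔ F ∙ v) = finrank F W + 2 := by
      rw [h, finrank_top, hW]
    refine ⟨fun hw => ?_, fun hv => ?_⟩
    · rw [sup_eq_left.2 ((span_singleton_le_iff_mem _ _).2 hw)] at hrank
      have := finrank_sup_span_singleton_le W v
      omega
    · rw [sup_eq_left.2 ((span_singleton_le_iff_mem _ _).2 hv)] at hrank
      have := finrank_sup_span_singleton_le W w
      omega
  · rintro ⟨hw, hv⟩
    apply eq_top_of_finrank_eq
    rw [finrank_sup_span_singleton hv, finrank_sup_span_singleton hw, hW]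

lemma card_sup_span_singleton_sup_span_singleton_ne_top [Finite V]
    (hW : finrank F W + 2 = finrank F V) :
    Nat.card {x : V × V // W ⊔ F ∙ x.1 ⊔ F ∙ x.2 ≠ ⊤} =
      Nat.card F ^ finrank F W * Nat.card F ^ (finrank F W + 2) +
        (Nat.card F ^ (finrank F W + 2) - Nat.card F ^ finrank F W) *
          Nat.card F ^ (finrank F W + 1) := by
  classical
  have := Fintype.ofFinite V
  have hfiber (w : V) : Nat.card {v : V // W ⊔ F ∙ w ⊔ F ∙ v ≠ ⊤} =
      if w ∈ W then Nat.card V else Nat.card F ^ (finrank F W + 1) := by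
    simp_rw [ne_eq, sup_span_singleton_sup_span_singleton_eq_top_iff hW, not_and, not_not]
    split_ifs with hw
    · simp [hw]
    · simp only [hw, not_false_eq_true, forall_const]
      rw [← finrank_sup_span_singleton hw]
      exact natCard_eq_pow_finrank
  rw [Nat.card_congr (Equiv.subtypeProdEquivSigmaSubtype fun w v => W ⊔ F ∙ w ⊔ F ∙ v ≠ ⊤),
    Nat.card_sigma]
  simp only [hfiber]
  have hin : #{w | w ∈ W} = Nat.card F ^ finrank F W := by
    rw [← Fintype.card_subtype, ← Nat.card_eq_fintype_card]
    exact natCard_eq_pow_finrank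
  have hV : Fintype.card V = Nat.card F ^ (finrank F W + 2) := by
    rw [← Nat.card_eq_fintype_card, hW]
    exact natCard_eq_pow_finrank
  have hout : #{w | w ∉ W} = Nat.card F ^ (finrank F W + 2) - Nat.card F ^ finrank F W := by
    have := Finset.card_filter_add_card_filter_not (s := Finset.univ) (· ∈ W)
    rw [Finset.card_univ] at this
    omega
  rw [Finset.sum_ite, Finset.sum_const, Finset.sum_const, hin, hout,
    Nat.card_eq_fintype_card (α := V), hV, smul_eq_mul, smul_eq_mul]

end CodimensionTwo

section AffineLines

variable {F V : Type*} [Field F] [AddCommGroup V] [Module F V]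

lemma range_add_smul_eq_mk' (u v : V) :
    (Set.range fun t : F => u + t • v) = mk' u (F ∙ v) := by
  ext x
  simp [mem_span_singleton, eq_sub_iff_add_eq, add_comm]

lemma isLine_iff {d : ℕ} {ℓ : Set (Fin d → F)} :
    IsLine F d ℓ ↔ ∃ u v : Fin d → F, v ≠ 0 ∧ ℓ = mk' u (F ∙ v) := by
  simp only [IsLine, range_add_smul_eq_mk']

lemma mk'_eq_mk'_iff {p₀ p : V} {D₀ D : Submodule F V} :
    mk' p D = mk' p₀ D₀ ↔ p ∈ mk' p₀ D₀ ∧ D = D₀ := by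
  constructor
  · intro h
    refine ⟨h ▸ self_mem_mk' p D, ?_⟩
    simpa using congrArg direction h
  · rintro ⟨hp, rfl⟩
    exact ext_of_direction_eq (by simp) ⟨p, self_mem_mk' _ _, hp⟩

lemma mk'_le_iff {p : V} {D : Submodule F V} {s : AffineSubspace F V} :
    mk' p D ≤ s ↔ p ∈ s ∧ D ≤ s.direction := by
  constructor
  · intro h
    exact ⟨h (self_mem_mk' p D), by simpa using direction_le h⟩
  · rintro ⟨hp, hD⟩
    rw [← mk'_eq hp]
    exact (mk'_le_mk'_iff p).2 hD

lemma span_singleton_eq_iff_mem {v v₀ : V} (hv : v ≠ 0) : (F ∙ v) = (F ∙ v₀) ↔ v ∈ F ∙ v₀ := by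
  refine ⟨fun h => h ▸ mem_span_singleton_self v, fun h => ?_⟩
  obtain ⟨c, rfl⟩ := mem_span_singleton.1 h
  exact span_singleton_smul_eq (IsUnit.mk0 c (left_ne_zero_of_smul hv)) v₀

lemma natCard_eq_natCard_direction (s : AffineSubspace F V) [Nonempty s] :
    Nat.card s = Nat.card s.direction :=
  Nat.card_congr (Equiv.vaddConst (Classical.arbitrary s)).symm

lemma card_mem_direction_ne_zero [Finite V] (s : AffineSubspace F V) [Nonempty s] :
    Nat.card {x : V × V // x.1 ∈ s ∧ x.2 ∈ s.direction ∧ x.2 ≠ 0} =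
      Nat.card s.direction * (Nat.card s.direction - 1) := by
  have hne : Nat.card {v : s.direction // v ≠ 0} = Nat.card s.direction - 1 := by
    classical
    have := Fintype.ofFinite s.direction
    simp [Nat.card_eq_fintype_card, Fintype.card_subtype_compl]
  rw [Nat.card_congr (Equiv.subtypeProdEquivProd (p := (· ∈ s))
      (q := fun v => v ∈ s.direction ∧ v ≠ 0)), Nat.card_prod,
    ← Nat.card_congr (Equiv.subtypeSubtypeEquivSubtypeInter (· ∈ s.direction) (· ≠ 0)),
    natCard_eq_natCard_direction]
  congr 1
  simpa using hne

lemma direction_affineSpan_mk'_union {τ : Set V} {t₀ : V} (ht₀ : t₀ ∈ τ) (u v : V) :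
    (affineSpan F ((mk' u (F ∙ v) : Set V) ∪ τ)).direction =
      (affineSpan F τ).direction ⊔ F ∙ (u - t₀) ⊔ F ∙ v := by
  rw [span_union, affineSpan_coe, sup_comm,
    direction_sup (mem_affineSpan F ht₀) (self_mem_mk' u _), direction_mk', vsub_eq_sub,
    sup_right_comm]

lemma affineSpan_mk'_union_eq_iff {S : AffineSubspace F V} {τ : Set V} (hτS : τ ⊆ S) {t₀ : V}
    (ht₀ : t₀ ∈ τ) (u v : V) :
    affineSpan F ((mk' u (F ∙ v) : Set V) ∪ τ) = S ↔
      (affineSpan F τ).direction ⊔ F ∙ (u - t₀) ⊔ F ∙ v = S.direction := by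
  rw [eq_iff_direction_eq_of_mem (mem_affineSpan F (Set.mem_union_right _ ht₀)) (hτS ht₀),
    direction_affineSpan_mk'_union ht₀]

lemma sup_span_singleton_sup_span_singleton_eq_iff_comap_subtype {D T : Submodule F V}
    (hT : T ≤ D) {a b : V} (ha : a ∈ D) (hb : b ∈ D) :
    T ⊔ F ∙ a ⊔ F ∙ b = D ↔
      comap D.subtype T ⊔ F ∙ (⟨a, ha⟩ : D) ⊔ F ∙ (⟨b, hb⟩ : D) = ⊤ := by
  rw [← (map_injective_of_injective D.injective_subtype).eq_iff, Submodule.map_sup,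
    Submodule.map_sup, Submodule.map_span, Submodule.map_span, map_comap_subtype,
    inf_eq_right.2 hT, map_subtype_top]
  simp

lemma card_not_spanning_lineParams_le [Finite V] {S : AffineSubspace F V} {τ : Set V}
    (hτS : τ ⊆ S) {t₀ : V} (ht₀ : t₀ ∈ τ) :
    Nat.card {x : V × V // x.2 ≠ 0 ∧ (mk' x.1 (F ∙ x.2) : Set V) ⊆ S ∧
        ¬affineSpan F ((mk' x.1 (F ∙ x.2) : Set V) ∪ τ) = S} ≤
      Nat.card {y : S.direction × S.direction //
        comap S.direction.subtype (affineSpan F τ).direction ⊔ F ∙ y.1 ⊔ F ∙ y.2 ≠ ⊤} := by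
  have hTD := direction_le (affineSpan_le.2 hτS)
  have hmem {u v : V} (h : (mk' u (F ∙ v) : Set V) ⊆ S) :
      u - t₀ ∈ S.direction ∧ v ∈ S.direction := by
    obtain ⟨hu, hv⟩ := mk'_le_iff.1 (SetLike.coe_subset_coe.1 h)
    exact ⟨vsub_mem_direction hu (hτS ht₀), (span_singleton_le_iff_mem _ _).1 hv⟩
  refine Nat.card_le_card_of_injective
    (fun x => ⟨(⟨x.1.1 - t₀, (hmem x.2.2.1).1⟩, ⟨x.1.2, (hmem x.2.2.1).2⟩), by
      rw [Ne, ← sup_span_singleton_sup_span_singleton_eq_iff_comap_subtype hTD,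
        ← affineSpan_mk'_union_eq_iff hτS ht₀]
      exact x.2.2.2⟩) ?_
  rintro ⟨⟨u, v⟩, hx⟩ ⟨⟨u', v'⟩, hx'⟩ h
  simp only [Subtype.mk.injEq, Prod.mk.injEq, sub_left_inj] at h
  obtain ⟨rfl, rfl⟩ := h
  rfl

end AffineLines

section Lines

variable {F : Type*} [Field F] [Finite F] {d : ℕ}

lemma card_lineParams (P : Set (Fin d → F) → Prop) :
    Nat.card {x : (Fin d → F) × (Fin d → F) // x.2 ≠ 0 ∧ P (mk' x.1 (F ∙ x.2))} =
      Nat.card {ℓ : Set (Fin d → F) // IsLine F d ℓ ∧ P ℓ} * (Nat.card F * (Nat.card F - 1)) := by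
  refine card_eq_card_mul_of_card_fiber
    (fun x => ⟨mk' x.1.1 (F ∙ x.1.2), isLine_iff.2 ⟨_, _, x.2.1, rfl⟩, x.2.2⟩) ?_
  rintro ⟨ℓ, hℓ, hP⟩
  obtain ⟨u₀, v₀, hv₀, rfl⟩ := isLine_iff.1 hℓ
  have hfiber (x : (Fin d → F) × (Fin d → F)) :
      (x.2 ≠ 0 ∧ P (mk' x.1 (F ∙ x.2))) ∧
          (mk' x.1 (F ∙ x.2) : Set (Fin d → F)) = mk' u₀ (F ∙ v₀) ↔
        x.1 ∈ mk' u₀ (F ∙ v₀) ∧ x.2 ∈ (mk' u₀ (F ∙ v₀)).direction ∧ x.2 ≠ 0 := by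
    rw [SetLike.coe_set_eq, direction_mk']
    constructor
    · rintro ⟨⟨hv, -⟩, h⟩
      rw [mk'_eq_mk'_iff, span_singleton_eq_iff_mem hv] at h
      exact ⟨h.1, h.2, hv⟩
    · rintro ⟨hu, hv₀', hv⟩
      have h : mk' x.1 (F ∙ x.2) = mk' u₀ (F ∙ v₀) :=
        mk'_eq_mk'_iff.2 ⟨hu, (span_singleton_eq_iff_mem hv).2 hv₀'⟩
      exact ⟨⟨hv, h ▸ hP⟩, h⟩
  calc _ = Nat.card {x : (Fin d → F) × (Fin d → F) // (x.2 ≠ 0 ∧ P (mk' x.1 (F ∙ x.2))) ∧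
          (mk' x.1 (F ∙ x.2) : Set (Fin d → F)) = mk' u₀ (F ∙ v₀)} :=
        Nat.card_congr ((Equiv.subtypeEquivRight fun _ => Subtype.ext_iff).trans
          (Equiv.subtypeSubtypeEquivSubtypeInter
            (fun x : (Fin d → F) × (Fin d → F) => x.2 ≠ 0 ∧ P (mk' x.1 (F ∙ x.2)))
            fun x => (mk' x.1 (F ∙ x.2) : Set (Fin d → F)) = mk' u₀ (F ∙ v₀)))
    _ = _ := by
      rw [Nat.card_congr (Equiv.subtypeEquivRight hfiber), card_mem_direction_ne_zero,
        direction_mk', natCard_eq_pow_finrank (K := F), finrank_span_singleton hv₀, pow_one]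

lemma card_lines_subset_mul (S : AffineSubspace F (Fin d → F)) [Nonempty S] :
    Nat.card {ℓ : Set (Fin d → F) // IsLine F d ℓ ∧ ℓ ⊆ S} * (Nat.card F * (Nat.card F - 1)) =
      Nat.card S.direction * (Nat.card S.direction - 1) := by
  rw [← card_lineParams, ← card_mem_direction_ne_zero]
  refine Nat.card_congr (Equiv.subtypeEquivRight fun x => ?_)
  rw [SetLike.coe_subset_coe, mk'_le_iff, span_singleton_le_iff_mem]
  tauto

lemma card_lines_subset_mul_le_spanning_add {S : AffineSubspace F (Fin d → F)}
    {τ : Set (Fin d → F)} (hτS : τ ⊆ S) {t₀ : Fin d → F} (ht₀ : t₀ ∈ τ) :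
    Nat.card {ℓ : Set (Fin d → F) // IsLine F d ℓ ∧ ℓ ⊆ S} * (Nat.card F * (Nat.card F - 1)) ≤
      Nat.card {ℓ : Set (Fin d → F) // IsLine F d ℓ ∧ ℓ ⊆ S ∧ affineSpan F (ℓ ∪ τ) = S} *
          (Nat.card F * (Nat.card F - 1)) +
        Nat.card {y : S.direction × S.direction //
          comap S.direction.subtype (affineSpan F τ).direction ⊔ F ∙ y.1 ⊔ F ∙ y.2 ≠ ⊤} := by
  rw [← card_lineParams, ← card_lineParams (fun ℓ => ℓ ⊆ S ∧ affineSpan F (ℓ ∪ τ) = S),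
    card_eq_card_and_add_card_and_not _
      (fun x => affineSpan F ((mk' x.1 (F ∙ x.2) : Set (Fin d → F)) ∪ τ) = S)]
  simp only [and_assoc]
  exact Nat.add_le_add_left (card_not_spanning_lineParams_le hτS ht₀) _

end Lines

lemma one_sub_two_inv_mul_lt {p k A G B : ℕ} (hp : 2 ≤ p)
    (hA : A * (p * (p - 1)) = p ^ (k + 2) * (p ^ (k + 2) - 1))
    (hAG : A * (p * (p - 1)) ≤ G * (p * (p - 1)) + B)
    (hB : B = p ^ k * p ^ (k + 2) + (p ^ (k + 2) - p ^ k) * p ^ (k + 1)) :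
    (1 - 2 * (p : ℝ)⁻¹) * A < G := by
  have hp1 : 1 ≤ p := by omega
  have hpk : p ^ k ≤ p ^ (k + 2) := Nat.pow_le_pow_right hp1 (by omega)
  have hpk1 : 1 ≤ p ^ (k + 2) := Nat.one_le_pow _ _ hp1
  have hpR : (2 : ℝ) ≤ p := by exact_mod_cast hp
  have hc : (0 : ℝ) < p * (p - 1) := by nlinarith
  have hA' : (A : ℝ) * (p * (p - 1)) = p ^ k * p ^ 2 * (p ^ k * p ^ 2 - 1) := by
    have := congrArg (Nat.cast : ℕ → ℝ) hA
    push_cast [Nat.cast_sub hp1, Nat.cast_sub hpk1] at this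
    rw [this]
    ring
  have hAG' : (A : ℝ) * (p * (p - 1)) ≤ G * (p * (p - 1)) + B := by
    have := (Nat.cast_le (α := ℝ)).2 hAG
    push_cast [Nat.cast_sub hp1] at this
    exact this
  have hB' : (B : ℝ) = p ^ k * p ^ k * p * (p ^ 2 + p - 1) := by
    have := congrArg (Nat.cast : ℕ → ℝ) hB
    push_cast [Nat.cast_sub hpk] at this
    rw [this]
    ring
  have hbad : (B : ℝ) < 2 * (A * (p * (p - 1))) / p := by
    have hx : (1 : ℝ) ≤ p ^ k := one_le_pow₀ (by linarith)
    have hpos : (0 : ℝ) < p ^ k * p ^ 2 := by positivity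
    have hgap : (0 : ℝ) < p ^ k * (p ^ 2 - p + 1) - 2 := by nlinarith
    rw [lt_div_iff₀ (by linarith), hA', hB']
    nlinarith [mul_pos hpos hgap]
  refine lt_of_mul_lt_mul_right ?_ hc.le
  calc (1 - 2 * (p : ℝ)⁻¹) * A * (p * (p - 1))
      = A * (p * (p - 1)) - 2 * (A * (p * (p - 1))) / p := by field_simp
    _ < G * (p * (p - 1)) := by linarith

theorem most_lines_in_subspace_span_general (F : Type*) [Field F] [Fintype F]
    (d q : ℕ) (hq : 1 ≤ q)
    (S : AffineSubspace F (Fin d → F))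
    (hS : Module.finrank F S.direction = q + 1)
    (τ : Set (Fin d → F)) (hτS : τ ⊆ (S : Set (Fin d → F)))
    (hτne : τ.Nonempty)
    (hτdim : Module.finrank F (affineSpan F τ).direction = q - 1) :
    (1 - 2 * (Fintype.card F : ℝ)⁻¹) *
        (Nat.card {ℓ : Set (Fin d → F) //
          IsLine F d ℓ ∧ ℓ ⊆ (S : Set (Fin d → F))} : ℝ) <
      (Nat.card {ℓ : Set (Fin d → F) //
        IsLine F d ℓ ∧ ℓ ⊆ (S : Set (Fin d → F)) ∧
          affineSpan F (ℓ ∪ τ) = S} : ℝ) := by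
  obtain ⟨t₀, ht₀⟩ := hτne
  have : Nonempty S := ⟨⟨t₀, hτS ht₀⟩⟩
  have hT : finrank F ↥(comap S.direction.subtype (affineSpan F τ).direction) + 2 =
      finrank F S.direction := by
    rw [(comapSubtypeEquivOfLe (direction_le (affineSpan_le.2 hτS))).finrank_eq, hτdim, hS]
    omega
  rw [← Nat.card_eq_fintype_card]
  refine one_sub_two_inv_mul_lt Finite.one_lt_card ?_
    (card_lines_subset_mul_le_spanning_add hτS ht₀)
    (card_sup_span_singleton_sup_span_singleton_ne_top hT)
  rw [card_lines_subset_mul, natCard_eq_pow_finrank (K := F), ← hT]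

/-- If `S ⊆ F^d` is an affine subspace of dimension `q + 1` and `τ ⊆ S` has
affine span of dimension `q - 1`, then among the lines contained in `S`, the
fraction of lines `ℓ` whose union with `τ` affinely spans all of `S` is
greater than `1 - 2·|F|⁻¹`. -/
theorem most_lines_in_subspace_span (F : Type*) [Field F] [Fintype F]
    (d q : ℕ) (hq : 1 ≤ q)
    (S : AffineSubspace F (Fin d → F))
    (hS : Module.finrank F S.direction = q + 1)
    (τ : Set (Fin d → F)) (hτS : τ ⊆ (S : Set (Fin d → F)))
    (hτfin : τ.Finite) (hτne : τ.Nonempty)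
    (hτdim : Module.finrank F (affineSpan F τ).direction = q - 1) :
    (1 - 2 * (Fintype.card F : ℝ)⁻¹) *
        (Nat.card {ℓ : Set (Fin d → F) //
          IsLine F d ℓ ∧ ℓ ⊆ (S : Set (Fin d → F))} : ℝ) <
      (Nat.card {ℓ : Set (Fin d → F) //
        IsLine F d ℓ ∧ ℓ ⊆ (S : Set (Fin d → F)) ∧
          affineSpan F (ℓ ∪ τ) = S} : ℝ) :=
  most_lines_in_subspace_span_general F d q hq S hS τ hτS hτne hτdim
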